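/- Let v ∈ L²((0,π), ℝ) be real-valued and define ŵ(x) = v(x) + (x − π/2)². With the Fourier coefficients c_k(f) = ∫₀^π f(x)·√(2/π)·cos(2kx) dx and s_k(f) = ∫₀^π f(x)·√(2/π)·sin(2kx) dx for k ≥ 1, and c₀(f) = ∫₀^π f(x)·(1/√π) dx, one has: for every integer k ≥ 1, c_k(v) = (k²/√(2π))·[ (c_k(ŵ)² + s_k(ŵ)²) − (c_k(v)² + s_k(v)²) − π/(2k⁴) ]; and c₀(v) = (6/π^{5/2})·[ c₀(ŵ)² − c₀(v)² − π⁵/144 ]. -/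

import Mathlib

open MeasureTheory intervalIntegral

/-- Cosine Fourier coefficient `c_k(f) = ∫₀^π f(x)·√(2/π)·cos(2kx) dx` for `k ≥ 1`. -/
noncomputable def cosCoeff (f : ℝ → ℝ) (k : ℕ) : ℝ :=
  ∫ x in (0:ℝ)..Real.pi, f x * (Real.sqrt (2 / Real.pi) * Real.cos (2 * k * x))

/-- Sine Fourier coefficient `s_k(f) = ∫₀^π f(x)·√(2/π)·sin(2kx) dx`. -/
noncomputable def sinCoeff (f : ℝ → ℝ) (k : ℕ) : ℝ :=
  ∫ x in (0:ℝ)..Real.pi, f x * (Real.sqrt (2 / Real.pi) * Real.sin (2 * k * x))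

/-- Zeroth Fourier coefficient `c₀(f) = ∫₀^π f(x)·(1/√π) dx`. -/
noncomputable def zeroCoeff (f : ℝ → ℝ) : ℝ :=
  ∫ x in (0:ℝ)..Real.pi, f x * (1 / Real.sqrt Real.pi)

/-! With `q x = (x - π/2)²` we have `ŵ = v + q`, and all coefficients are additive because `v`,
being square integrable on the bounded interval `(0, π)`, is integrable there. Since `q` is
symmetric about `π/2` while `sin 2kx` is antisymmetric, `s_k(q) = 0`; moreover
`c_k(q) = √(2/π) · π/(2k²)` and `c₀(q) = π^{5/2}/12`. Expanding the
squares, `c_k(ŵ)² + s_k(ŵ)² - c_k(v)² - s_k(v)² = 2 c_k(v) c_k(q) + c_k(q)²`, and `c_k(q)²` is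
exactly the subtracted constant `π/(2k⁴)` (resp. `π⁵/144`), leaving `2 c_k(q) · c_k(v)`. -/

open Real

lemma MeasureTheory.MemLp.intervalIntegrable_of_restrict_Ioo {E : Type*} [NormedAddCommGroup E]
    {f : ℝ → E} {a b : ℝ} {p : ENNReal} (hp : 1 ≤ p) (hab : a ≤ b)
    (hf : MemLp f p (volume.restrict (Set.Ioo a b))) : IntervalIntegrable f volume a b :=
  (intervalIntegrable_iff_integrableOn_Ioo_of_le hab).2 (hf.integrable hp)

lemma intervalIntegral.integral_eq_zero_of_reflect_eq_neg {f : ℝ → ℝ} {a b : ℝ}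
    (hf : ∀ x, f (a + b - x) = -f x) : ∫ x in a..b, f x = 0 := by
  have h := integral_comp_sub_left f (a + b) (a := a) (b := b)
  simp only [hf, integral_neg, add_sub_cancel_right, add_sub_cancel_left] at h
  linarith

section Coefficients

variable {f g : ℝ → ℝ}

lemma cosCoeff_add (hf : IntervalIntegrable f volume 0 π) (hg : IntervalIntegrable g volume 0 π)
    (k : ℕ) : cosCoeff (f + g) k = cosCoeff f k + cosCoeff g k := by
  simp only [cosCoeff, Pi.add_apply, add_mul]
  exact integral_add (hf.mul_continuousOn (by fun_prop)) (hg.mul_continuousOn (by fun_prop))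

lemma sinCoeff_add (hf : IntervalIntegrable f volume 0 π) (hg : IntervalIntegrable g volume 0 π)
    (k : ℕ) : sinCoeff (f + g) k = sinCoeff f k + sinCoeff g k := by
  simp only [sinCoeff, Pi.add_apply, add_mul]
  exact integral_add (hf.mul_continuousOn (by fun_prop)) (hg.mul_continuousOn (by fun_prop))

lemma zeroCoeff_add (hf : IntervalIntegrable f volume 0 π)
    (hg : IntervalIntegrable g volume 0 π) : zeroCoeff (f + g) = zeroCoeff f + zeroCoeff g := by
  simp only [zeroCoeff, Pi.add_apply, add_mul]
  exact integral_add (hf.mul_continuousOn (by fun_prop)) (hg.mul_continuousOn (by fun_prop))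

end Coefficients

lemma integral_sub_pi_div_two_sq : ∫ x in (0:ℝ)..π, (x - π / 2) ^ 2 = π ^ 3 / 12 := by
  rw [integral_comp_sub_right (fun x => x ^ 2), integral_pow]
  ring

lemma integral_sub_pi_div_two_sq_mul_cos {k : ℕ} (hk : k ≠ 0) :
    ∫ x in (0:ℝ)..π, (x - π / 2) ^ 2 * cos (2 * k * x) = π / (2 * k ^ 2) := by
  set a : ℝ := 2 * k with ha_def
  have ha : a ≠ 0 := by positivity
  have hderiv : ∀ x, HasDerivAt
      (fun x => ((x - π / 2) ^ 2 / a - 2 / a ^ 3) * sin (a * x)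
        + 2 * (x - π / 2) / a ^ 2 * cos (a * x))
      ((x - π / 2) ^ 2 * cos (a * x)) x := by
    intro x
    have hshift := (hasDerivAt_id' x).sub_const (π / 2)
    have hlin := (hasDerivAt_id' x).const_mul a
    refine ((((hshift.fun_pow 2).div_const a).sub_const (2 / a ^ 3)).mul hlin.sin).add
      (((hshift.const_mul 2).div_const (a ^ 2)).mul hlin.cos) |>.congr_deriv ?_
    field_simp
    ring
  rw [integral_eq_sub_of_hasDerivAt (fun x _ => hderiv x)
    (Continuous.intervalIntegrable (by fun_prop) _ _)]
  have hsin : sin (a * π) = 0 := by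
    simpa [ha_def, mul_assoc, mul_comm] using sin_nat_mul_pi (2 * k)
  have hcos : cos (a * π) = 1 := by
    simpa [ha_def, mul_assoc, mul_comm, mul_left_comm] using cos_nat_mul_two_pi k
  simp only [hsin, hcos, mul_zero, sin_zero, cos_zero]
  field_simp
  ring

lemma cosCoeff_sub_pi_div_two_sq {k : ℕ} (hk : k ≠ 0) :
    cosCoeff (fun x => (x - π / 2) ^ 2) k = √(2 / π) * (π / (2 * k ^ 2)) := by
  rw [cosCoeff, ← integral_sub_pi_div_two_sq_mul_cos hk, ← intervalIntegral.integral_const_mul]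
  congr 1 with x
  ring

lemma sinCoeff_sub_pi_div_two_sq (k : ℕ) : sinCoeff (fun x => (x - π / 2) ^ 2) k = 0 := by
  refine integral_eq_zero_of_reflect_eq_neg fun x => ?_
  have hsin : sin (2 * k * (0 + π - x)) = -sin (2 * k * x) := by
    rw [show 2 * k * (0 + π - x) = (k : ℤ) * (2 * π) - 2 * k * x by push_cast; ring,
      sin_int_mul_two_pi_sub]
  rw [hsin]
  ring

lemma zeroCoeff_sub_pi_div_two_sq :
    zeroCoeff (fun x => (x - π / 2) ^ 2) = π ^ 3 / 12 * (1 / √π) := by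
  rw [zeroCoeff, intervalIntegral.integral_mul_const, integral_sub_pi_div_two_sq]

theorem stmt18 (v : ℝ → ℝ)
    (hv : MemLp v 2 (volume.restrict (Set.Ioo (0:ℝ) Real.pi)))
    (what : ℝ → ℝ) (hwhat : ∀ x, what x = v x + (x - Real.pi / 2) ^ 2) :
    (∀ k : ℕ, 1 ≤ k →
      cosCoeff v k = (k ^ 2 / Real.sqrt (2 * Real.pi)) *
        ((cosCoeff what k ^ 2 + sinCoeff what k ^ 2)
          - (cosCoeff v k ^ 2 + sinCoeff v k ^ 2)
          - Real.pi / (2 * k ^ 4))) ∧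
    zeroCoeff v = (6 / Real.pi ^ ((5:ℝ) / 2)) *
      (zeroCoeff what ^ 2 - zeroCoeff v ^ 2 - Real.pi ^ 5 / 144) := by
  have hIv : IntervalIntegrable v volume 0 π :=
    hv.intervalIntegrable_of_restrict_Ioo one_le_two pi_pos.le
  have hIq : IntervalIntegrable (fun x => (x - π / 2) ^ 2) volume 0 π :=
    Continuous.intervalIntegrable (by fun_prop) _ _
  obtain rfl : what = v + fun x => (x - π / 2) ^ 2 := funext hwhat
  have hsqrt_two_mul_pi : √(2 * π) = √(2 / π) * π := by
    rw [← sqrt_sq pi_pos.le, ← sqrt_mul (by positivity), sqrt_sq pi_pos.le]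
    congr 1
    field_simp
  have hpi_rpow : π ^ ((5:ℝ) / 2) = π ^ 3 / √π := by
    rw [show (5:ℝ) / 2 = (3:ℕ) - 1 / 2 by norm_num, rpow_sub pi_pos, rpow_natCast, sqrt_eq_rpow]
  refine ⟨fun k hk => ?_, ?_⟩
  · have hC : (√(2 / π) * (π / (2 * k ^ 2))) ^ 2 = π / (2 * k ^ 4) := by
      rw [mul_pow, sq_sqrt (by positivity)]
      field_simp
    rw [cosCoeff_add hIv hIq, sinCoeff_add hIv hIq, cosCoeff_sub_pi_div_two_sq (by omega),
      sinCoeff_sub_pi_div_two_sq, ← hC, hsqrt_two_mul_pi]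
    field_simp
    ring
  · have hC : (π ^ 3 / 12 * (1 / √π)) ^ 2 = π ^ 5 / 144 := by
      rw [mul_pow, one_div_pow, sq_sqrt pi_pos.le]
      field_simp
      ring
    rw [zeroCoeff_add hIv hIq, zeroCoeff_sub_pi_div_two_sq, ← hC, hpi_rpow]
    field_simp
    ring
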